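/- Let W be a Weyl group with parabolic subgroup W_P, and suppose v = s·u for unequal cosets u, v in W/W_P and a reflection s in W. Then the reflection s with this property is unique. -/

import Mathlib

/-!
Translating by a representative `g` of `u`, it suffices to show: if `x` and `y` are reflections
with `x * y ∈ W_P` and `y ∉ W_P`, then `x = y`.

Let `W` act on `W × {±1}` with `s_i` acting by `(t, e) ↦ (s_i t s_i, e · (-1)^[t = s_i])`. The
sign component `η(w, t)` of this action (the cocycle behind the strong exchange condition) is `-1`
only if `t` occurs in the right inversion sequence of every word for `w`. Hence `η` is trivial on
`W_P × (W ∖ W_P)`, and the cocycle identity forces `η(x, y) = -1`. Writing `x = z⁻¹ s_k z` with a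
reduced palindromic word, such a `y ≠ x` makes `y x y` or `(x y x) x (x y x)` shorter than `x`,
and the conjugated pair again satisfies the hypotheses, so induction on `ℓ(x)` concludes.
-/

namespace CoxeterSystem

open scoped Classical

variable {B W : Type*} [Group W] {M : CoxeterMatrix B} (cs : CoxeterSystem M W)

local prefix:100 "s" => cs.simple
local prefix:100 "π" => cs.wordProd
local prefix:100 "ℓ" => cs.length
local prefix:100 "ris " => cs.rightInvSeq

theorem _root_.conj_eq_iff_eq_conj_inv {G : Type*} [Group G] {g t x : G} :
    g * t * g⁻¹ = x ↔ t = g⁻¹ * x * g := by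
  constructor <;> rintro rfl <;> group

noncomputable def simpleSignPerm (i : B) : Equiv.Perm (W × ℤˣ) :=
  Function.Involutive.toPerm (fun p => (s i * p.1 * s i, p.2 * if p.1 = s i then -1 else 1)) <| by
    rintro ⟨t, e⟩
    by_cases ht : t = s i <;>
      simp [ht, mul_assoc, cs.simple_mul_simple_cancel_left, mul_eq_one_iff_eq_inv, cs.inv_simple]

theorem simpleSignPerm_apply (i : B) (t : W) (e : ℤˣ) :
    cs.simpleSignPerm i (t, e) = (s i * t * s i, e * if t = s i then -1 else 1) := rfl

theorem simpleSignPerm_mul_pow_apply (i j : B) (n : ℕ) (t : W) (e : ℤˣ) :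
    ((cs.simpleSignPerm i * cs.simpleSignPerm j) ^ n) (t, e) =
      ((s i * s j) ^ n * t * ((s i * s j) ^ n)⁻¹,
        e * ∏ r ∈ Finset.range (2 * n),
          if t = ((s i * s j) ^ r)⁻¹ * s j then -1 else 1) := by
  set c := s i * s j
  have hc : c⁻¹ = s j * s i := by simp [c, cs.inv_simple]
  have hshift (t : W) (r : ℕ) :
      c * t * c⁻¹ = (c ^ r)⁻¹ * s j ↔ t = (c ^ (r + 2))⁻¹ * s j := by
    have hsc : s j * c = c⁻¹ * s j := by simp only [c, hc, mul_assoc]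
    rw [conj_eq_iff_eq_conj_inv, mul_assoc, mul_assoc, hsc, pow_add, sq]
    group
  have hstep (t : W) (e : ℤˣ) : (cs.simpleSignPerm i * cs.simpleSignPerm j) (t, e) =
      (c * t * c⁻¹, e * (if t = (c ^ 0)⁻¹ * s j then -1 else 1) *
        (if t = (c ^ 1)⁻¹ * s j then -1 else 1)) := by
    have : s j * t * s j = s i ↔ t = (c ^ 1)⁻¹ * s j := by
      nth_rewrite 2 [← cs.inv_simple j]
      rw [conj_eq_iff_eq_conj_inv, cs.inv_simple, pow_one, hc]
    rw [Equiv.Perm.mul_apply, simpleSignPerm_apply, simpleSignPerm_apply, if_congr this rfl rfl,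
      hc]
    simp [c, mul_assoc]
  induction n generalizing t e with
  | zero => simp
  | succ n ih =>
    rw [pow_succ, Equiv.Perm.mul_apply, hstep, ih, mul_add_one, Finset.prod_range_succ',
      Finset.prod_range_succ']
    refine Prod.ext ?_ ?_
    · simp only [pow_succ, mul_inv_rev, mul_assoc]
    · simp only [hshift]
      ac_rfl

theorem isLiftable_simpleSignPerm : M.IsLiftable cs.simpleSignPerm := by
  intro i j
  ext ⟨t, e⟩ : 1
  -- `(s i * s j) ^ M i j = 1`, so the `2 * M i j` signs come in equal pairs.
  rw [simpleSignPerm_mul_pow_apply, cs.simple_mul_simple_pow, two_mul, Finset.prod_range_add]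
  simp only [pow_add, cs.simple_mul_simple_pow, one_mul, Int.units_mul_self, mul_one, inv_one,
    Equiv.Perm.one_apply]

noncomputable def signRep : W →* Equiv.Perm (W × ℤˣ) :=
  cs.lift ⟨cs.simpleSignPerm, cs.isLiftable_simpleSignPerm⟩

theorem signRep_simple (i : B) : cs.signRep (s i) = cs.simpleSignPerm i :=
  cs.lift_apply_simple cs.isLiftable_simpleSignPerm i

noncomputable def inversionSign (w t : W) : ℤˣ := (cs.signRep w (t, 1)).2

theorem signRep_apply (w t : W) (e : ℤˣ) :
    cs.signRep w (t, e) = (w * t * w⁻¹, e * cs.inversionSign w t) := by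
  induction w using cs.simple_induction_left generalizing t e with
  | one => simp [inversionSign]
  | mul_simple_left w i ih =>
    have h (e : ℤˣ) : cs.signRep (s i * w) (t, e) = (s i * w * t * (s i * w)⁻¹,
        e * cs.inversionSign w t * if w * t * w⁻¹ = s i then -1 else 1) := by
      rw [map_mul, Equiv.Perm.mul_apply, ih, signRep_simple, simpleSignPerm_apply]
      simp [mul_assoc, cs.inv_simple]
    rw [h, show cs.inversionSign (s i * w) t = _ from congrArg Prod.snd (h 1)]
    simp only [one_mul, mul_assoc]

theorem inversionSign_mul (u v t : W) :
    cs.inversionSign (u * v) t = cs.inversionSign v t * cs.inversionSign u (v * t * v⁻¹) := by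
  have h := cs.signRep_apply (u * v) t 1
  rw [map_mul, Equiv.Perm.mul_apply, signRep_apply, signRep_apply] at h
  simpa using (congrArg Prod.snd h).symm

@[simp]
theorem inversionSign_one (t : W) : cs.inversionSign 1 t = 1 := by
  simp [inversionSign]

theorem inversionSign_simple (i : B) (t : W) :
    cs.inversionSign (s i) t = if t = s i then -1 else 1 := by
  rw [inversionSign, signRep_simple, simpleSignPerm_apply, one_mul]

theorem inversionSign_self {t : W} (ht : cs.IsReflection t) : cs.inversionSign t t = -1 := by
  obtain ⟨w, i, rfl⟩ := ht
  have hconj : w⁻¹ * (w * s i * w⁻¹) * w⁻¹⁻¹ = s i := by group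
  have hinv := cs.inversionSign_mul w w⁻¹ (w * s i * w⁻¹)
  rw [mul_inv_cancel, inversionSign_one, hconj] at hinv
  rw [cs.inversionSign_mul (w * s i), hconj, inversionSign_mul, inversionSign_simple, if_pos rfl,
    mul_left_comm, cs.inv_simple, cs.simple_mul_simple_cancel_right, ← hinv, mul_one]

theorem inversionSign_wordProd_eq_one {ω : List B} {t : W} (ht : t ∉ ris ω) :
    cs.inversionSign (π ω) t = 1 := by
  induction ω with
  | nil => simp
  | cons i ω ih =>
    simp only [rightInvSeq, List.mem_cons, not_or] at ht
    rw [wordProd_cons, inversionSign_mul, ih ht.2, inversionSign_simple, if_neg, one_mul]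
    rw [conj_eq_iff_eq_conj_inv]
    exact ht.1

theorem mem_rightInvSeq_of_inversionSign_eq_neg_one {ω : List B} {t : W}
    (h : cs.inversionSign (π ω) t = -1) : t ∈ ris ω := by
  by_contra ht
  rw [cs.inversionSign_wordProd_eq_one ht] at h
  exact absurd h (by decide)

theorem inversionSign_eq_one_of_mem_closure {X : Set B} {w t : W}
    (hw : w ∈ Subgroup.closure (cs.simple '' X)) (ht : t ∉ Subgroup.closure (cs.simple '' X)) :
    cs.inversionSign w t = 1 := by
  have hconj {v t : W} (hv : v ∈ Subgroup.closure (cs.simple '' X))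
      (ht : t ∉ Subgroup.closure (cs.simple '' X)) :
      v * t * v⁻¹ ∉ Subgroup.closure (cs.simple '' X) := by
    rwa [Subgroup.mul_mem_cancel_right _ (inv_mem hv), Subgroup.mul_mem_cancel_left _ hv]
  induction hw using Subgroup.closure_induction generalizing t with
  | mem w hw =>
    obtain ⟨i, hi, rfl⟩ := hw
    rw [inversionSign_simple, if_neg]
    rintro rfl
    exact ht (Subgroup.subset_closure ⟨i, hi, rfl⟩)
  | one => exact cs.inversionSign_one t
  | mul u v _ hv ihu ihv =>
    rw [inversionSign_mul, ihv ht, ihu (hconj hv ht), one_mul]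
  | inv w hw ih =>
    have h := cs.inversionSign_mul w w⁻¹ t
    rwa [mul_inv_cancel, inversionSign_one, ih (hconj (inv_mem hw) ht), mul_one, eq_comm] at h

theorem rightInvSeq_append (α β : List B) :
    ris (α ++ β) = (ris α).map (fun r => (π β)⁻¹ * r * π β) ++ ris β := by
  induction α with
  | nil => simp
  | cons i α ih =>
    simp only [List.cons_append, rightInvSeq, ih, wordProd_append, List.map_cons, mul_inv_rev]
    group

theorem IsReflection.exists_isReduced_palindrome {t : W} (ht : cs.IsReflection t) :
    ∃ (ω : List B) (k : B),
      cs.IsReduced (ω.reverse ++ k :: ω) ∧ t = π (ω.reverse ++ k :: ω) := by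
  obtain ⟨ωt, hred, rfl⟩ := cs.exists_isReduced t
  obtain ⟨j, hj, hget⟩ := List.getElem_of_mem
    (cs.mem_rightInvSeq_of_inversionSign_eq_neg_one (cs.inversionSign_self ht))
  have hjω : j < ωt.length := by simpa using hj
  rw [getElem_rightInvSeq _ _ _ hjω, List.getElem?_eq_getElem hjω, Option.map_some,
    Option.getD_some] at hget
  set ω := ωt.drop (j + 1)
  set k := ωt[j]
  have hsplit : ωt = ωt.take j ++ k :: ω := by
    rw [← List.drop_eq_getElem_cons hjω, List.take_append_drop]
  have htake : π (ωt.take j) = (π ω)⁻¹ := by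
    apply mul_right_cancel (b := s k * π ω)
    rw [← mul_assoc (π ω)⁻¹, hget, ← wordProd_cons, ← wordProd_append, ← hsplit]
  have hlen : (ωt.take j).length = ω.length := by
    rw [← (hred.take j).eq, ← (hred.drop (j + 1)).eq, htake, length_inv]
  refine ⟨ω, k, ?_, by simpa [wordProd_append, wordProd_cons, mul_assoc] using hget.symm⟩
  rw [IsReduced, wordProd_append, wordProd_reverse, ← htake, ← wordProd_append, ← hsplit,
    hred.eq]
  conv_lhs => rw [hsplit]
  simp [hlen]

theorem length_conj_lt_of_length_mul_lt {z r : W} (k : B) (hr : cs.IsReflection r)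
    (hzr : ℓ (z * r) < ℓ z) : ℓ (r * (z⁻¹ * s k * z) * r) < 2 * ℓ z + 1 := by
  have hconj : r * (z⁻¹ * s k * z) * r = (z * r)⁻¹ * s k * (z * r) := by
    rw [mul_inv_rev, hr.inv]
    group
  calc ℓ (r * (z⁻¹ * s k * z) * r) ≤ ℓ ((z * r)⁻¹) + ℓ (s k) + ℓ (z * r) := by
        rw [hconj]
        exact (cs.length_mul_le _ _).trans (Nat.add_le_add_right (cs.length_mul_le _ _) _)
    _ < 2 * ℓ z + 1 := by
        rw [length_inv, length_simple]
        omega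

theorem IsReflection.length_conj_lt_of_inversionSign_eq_neg_one {t r : W}
    (ht : cs.IsReflection t) (hrt : r ≠ t) (h : cs.inversionSign t r = -1) :
    ℓ (r * t * r) < ℓ t ∨ ℓ (t * r * t * t * (t * r * t)) < ℓ t := by
  obtain ⟨ω, k, hΩ, rfl⟩ := ht.exists_isReduced_palindrome
  have hω : cs.IsReduced ω := by
    simpa [List.drop_append, List.drop_eq_nil_of_le] using hΩ.drop (ω.length + 1)
  set z := π ω with hz
  have hpal : π (ω.reverse ++ k :: ω) = z⁻¹ * s k * z := by
    simp [wordProd_append, wordProd_cons, mul_assoc, z]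
  have hlen : ℓ (π (ω.reverse ++ k :: ω)) = 2 * ℓ z + 1 := by
    rw [hΩ.eq, hω.eq, List.length_append, List.length_reverse, List.length_cons]
    ring
  have hmem := cs.mem_rightInvSeq_of_inversionSign_eq_neg_one h
  rw [hlen, hpal]
  rw [hpal] at hrt
  rw [rightInvSeq_append, rightInvSeq_reverse, List.mem_append, List.mem_map] at hmem
  rcases hmem with ⟨e, he, rfl⟩ | hmem
  · -- `r` comes from the first half of the palindrome: then `t r t = z⁻¹ e z` for a left
    -- inversion `e` of `z`.
    right
    rw [List.mem_reverse] at he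
    have htrt : z⁻¹ * s k * z * ((π (k :: ω))⁻¹ * e * π (k :: ω)) * (z⁻¹ * s k * z) =
        z⁻¹ * e * z := by
      rw [wordProd_cons, ← hz]
      simp only [mul_inv_rev, mul_assoc, mul_inv_cancel_left, cs.inv_simple,
        cs.simple_mul_simple_cancel_left]
    rw [htrt]
    apply length_conj_lt_of_length_mul_lt
    · simpa using (cs.isReflection_of_mem_leftInvSeq ω he).conj z⁻¹
    · simpa [hz, mul_assoc] using (cs.isLeftInversion_of_mem_leftInvSeq hω he).2
  · rw [rightInvSeq, List.mem_cons] at hmem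
    rcases hmem with rfl | hmem
    · exact absurd rfl hrt
    · exact .inl <| length_conj_lt_of_length_mul_lt cs k
        (cs.isReflection_of_mem_rightInvSeq ω hmem)
        (cs.isRightInversion_of_mem_rightInvSeq hω hmem).2

theorem IsReflection.eq_of_mul_mem_closure {X : Set B} {x y : W} (hx : cs.IsReflection x)
    (hy : cs.IsReflection y) (hxy : x * y ∈ Subgroup.closure (cs.simple '' X))
    (hyX : y ∉ Subgroup.closure (cs.simple '' X)) : x = y := by
  induction hn : ℓ x using Nat.strong_induction_on generalizing x y with
  | _ n ih =>
  subst hn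
  by_contra hne
  have hxx (z : W) : x * (x * z) = z := by rw [← mul_assoc, hx.mul_self, one_mul]
  have hyy (z : W) : y * (y * z) = z := by rw [← mul_assoc, hy.mul_self, one_mul]
  have hsign : cs.inversionSign x y = -1 := by
    have h := cs.inversionSign_mul x y y
    rw [cs.inversionSign_eq_one_of_mem_closure hxy hyX, cs.inversionSign_self hy, hy.mul_self,
      one_mul, hy.inv] at h
    simpa [neg_eq_iff_eq_neg] using h.symm
  have hxX : x ∉ Subgroup.closure (cs.simple '' X) := fun hxX =>
    hyX (by simpa using mul_mem (inv_mem hxX) hxy)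
  rcases hx.length_conj_lt_of_inversionSign_eq_neg_one cs (Ne.symm hne) hsign with hlt | hlt
  · have hyxy := ih _ hlt (by simpa [hy.inv] using hx.conj y) hy
      (by simpa [mul_assoc, hy.mul_self, hx.inv, hy.inv] using inv_mem hxy) hyX rfl
    exact hne (by simpa [mul_assoc, hyy, hy.mul_self] using congrArg (y * · * y) hyxy)
  · have hrefl : cs.IsReflection (x * y * x * x * (x * y * x)) := by
      simpa [mul_assoc, hx.inv, hy.inv] using hx.conj (x * y * x)
    have hmem : x * y * x * x * (x * y * x) * x ∈ Subgroup.closure (cs.simple '' X) := by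
      simpa [mul_assoc, hxx, hx.mul_self] using mul_mem hxy hxy
    rw [ih _ hlt hrefl hx hmem hxX rfl] at hlt
    exact lt_irrefl _ hlt

end CoxeterSystem

theorem reflection_unique_general {B W : Type*} [Group W] {M : CoxeterMatrix B}
    (cs : CoxeterSystem M W) (ΔP : Set B)
    (WP : Subgroup W) (hWP : WP = Subgroup.closure (cs.simple '' ΔP))
    (u v : W ⧸ WP) (huv : u ≠ v)
    (s s' : W) (hs : cs.IsReflection s) (hs' : cs.IsReflection s')
    (h : v = s • u) (h' : v = s' • u) : s = s' := by
  subst hWP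
  obtain ⟨g, rfl⟩ := QuotientGroup.mk_surjective u
  rw [MulAction.Quotient.smul_mk] at h h'
  have hmem : (g⁻¹ * s' * g) * (g⁻¹ * s * g) ∈ Subgroup.closure (cs.simple '' ΔP) := by
    simpa [mul_assoc, hs'.inv] using QuotientGroup.eq.mp (h'.symm.trans h)
  have hnmem : g⁻¹ * s * g ∉ Subgroup.closure (cs.simple '' ΔP) := fun hg =>
    huv ((QuotientGroup.eq.mpr (by simpa [mul_assoc] using hg)).trans h.symm)
  have hconj {t : W} (ht : cs.IsReflection t) : cs.IsReflection (g⁻¹ * t * g) := by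
    simpa using ht.conj g⁻¹
  simpa [eq_comm] using (hconj hs').eq_of_mul_mem_closure cs (hconj hs) hmem hnmem

theorem reflection_unique {B W : Type*} [Group W] [Finite W] {M : CoxeterMatrix B}
    (cs : CoxeterSystem M W) (ΔP : Set B)
    (WP : Subgroup W) (hWP : WP = Subgroup.closure (cs.simple '' ΔP))
    (u v : W ⧸ WP) (huv : u ≠ v)
    (s s' : W) (hs : cs.IsReflection s) (hs' : cs.IsReflection s')
    (h : v = s • u) (h' : v = s' • u) : s = s' :=
  reflection_unique_general cs ΔP WP hWP u v huv s s' hs hs' h h'
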